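/- (Lemma 1, asymptotic orthogonality) Let Nx, Ny be positive integers, N = Nx·Ny, and let (φ₁, θ₁), (φ₂, θ₂) be two direction pairs with δx = cos φ₁ cos θ₁ − cos φ₂ cos θ₂ and δy = sin φ₁ cos θ₁ − sin φ₂ cos θ₂, and assume sin(π δx/2) ≠ 0 and sin(π δy/2) ≠ 0. Then the crosstalk coefficient is bounded as |⟨v(φ₁, θ₁), v(φ₂, θ₂)⟩|² / N ≤ 1 / ( N · sin²(π δx/2) · sin²(π δy/2) ); in particular, the crosstalk coefficient tends to 0 as N = Nx·Ny → ∞, so distinct steering vectors become asymptotically orthogonal. -/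

import Mathlib

/-!
The inner product of two steering vectors factors over the two array axes into a product of
geometric sums whose ratios `exp (iπδx)`, `exp (iπδy)` lie on the unit circle. A geometric sum of
`z ≠ 1` with `‖z‖ ≤ 1` has norm at most `2 / ‖z - 1‖`, and `‖exp (it) - 1‖ = 2 |sin (t / 2)|`, so
`|⟨v₁, v₂⟩| ≤ 1 / |sin (πδx / 2) sin (πδy / 2)|` uniformly in `Nx, Ny`; dividing its square by
`N` gives the bound and its decay.
-/

/-- The steering vector of a half-wavelength spaced uniform planar array with
`Nx × Ny` elements, toward azimuth `φ` and elevation `θ`. -/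
noncomputable def upaSteering (Nx Ny : ℕ) (φ θ : ℝ) : Fin Nx × Fin Ny → ℂ :=
  fun p =>
    Complex.exp (-Complex.I * (Real.pi : ℂ) * (p.1 : ℂ) * ((Real.cos φ * Real.cos θ : ℝ) : ℂ)) *
    Complex.exp (-Complex.I * (Real.pi : ℂ) * (p.2 : ℂ) * ((Real.sin φ * Real.cos θ : ℝ) : ℂ))

/-- The crosstalk coefficient `|⟨v(φ₁,θ₁), v(φ₂,θ₂)⟩|² / N` between two UPA
steering vectors, with `N = Nx · Ny`. -/
noncomputable def upaCrosstalk (Nx Ny : ℕ) (φ₁ θ₁ φ₂ θ₂ : ℝ) : ℝ :=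
  (‖(∑ p : Fin Nx × Fin Ny,
      star (upaSteering Nx Ny φ₁ θ₁ p) * upaSteering Nx Ny φ₂ θ₂ p)‖)^2
    / ((Nx : ℝ) * (Ny : ℝ))

open Complex Finset Filter Topology
open scoped Real

theorem norm_geom_sum_le_of_norm_le_one {𝕜 : Type*} [NormedDivisionRing 𝕜] {x : 𝕜}
    (hx : ‖x‖ ≤ 1) (h1 : x ≠ 1) (n : ℕ) :
    ‖∑ i ∈ range n, x ^ i‖ ≤ 2 / ‖x - 1‖ := by
  rw [geom_sum_eq h1, norm_div]
  gcongr
  calc ‖x ^ n - 1‖ ≤ ‖x ^ n‖ + ‖(1 : 𝕜)‖ := norm_sub_le _ _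
    _ ≤ 1 + 1 := by
      rw [norm_pow, norm_one]
      gcongr
      exact pow_le_one₀ (norm_nonneg x) hx
    _ = 2 := one_add_one_eq_two

theorem norm_geom_sum_exp_I_mul_le {t : ℝ} (ht : Real.sin (t / 2) ≠ 0) (n : ℕ) :
    ‖∑ i ∈ range n, exp (I * t) ^ i‖ ≤ 1 / |Real.sin (t / 2)| := by
  have hnorm : ‖exp (I * t) - 1‖ = 2 * |Real.sin (t / 2)| := by
    rw [norm_exp_I_mul_ofReal_sub_one, norm_mul, Real.norm_ofNat, Real.norm_eq_abs]
  have hne : exp (I * t) ≠ 1 := by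
    intro h
    rw [h, sub_self, norm_zero] at hnorm
    exact ht (abs_eq_zero.mp (by linarith))
  calc _ ≤ 2 / ‖exp (I * t) - 1‖ :=
        norm_geom_sum_le_of_norm_le_one (by rw [mul_comm, norm_exp_ofReal_mul_I]) hne n
    _ = 1 / |Real.sin (t / 2)| := by
      rw [hnorm]
      field_simp

theorem star_upaSteering_mul_upaSteering (Nx Ny : ℕ) (φ₁ θ₁ φ₂ θ₂ : ℝ) (p : Fin Nx × Fin Ny) :
    star (upaSteering Nx Ny φ₁ θ₁ p) * upaSteering Nx Ny φ₂ θ₂ p =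
      exp (I * ↑(π * (Real.cos φ₁ * Real.cos θ₁ - Real.cos φ₂ * Real.cos θ₂))) ^ (p.1 : ℕ) *
      exp (I * ↑(π * (Real.sin φ₁ * Real.cos θ₁ - Real.sin φ₂ * Real.cos θ₂))) ^ (p.2 : ℕ) := by
  simp only [upaSteering, star_def, ← exp_conj, ← exp_nat_mul, ← exp_add, map_add, map_mul,
    map_neg, conj_I, conj_ofReal, map_natCast]
  congr 1
  push_cast
  ring

theorem sum_star_upaSteering_mul_upaSteering (Nx Ny : ℕ) (φ₁ θ₁ φ₂ θ₂ : ℝ) :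
    ∑ p, star (upaSteering Nx Ny φ₁ θ₁ p) * upaSteering Nx Ny φ₂ θ₂ p =
      (∑ n ∈ range Nx,
        exp (I * ↑(π * (Real.cos φ₁ * Real.cos θ₁ - Real.cos φ₂ * Real.cos θ₂))) ^ n) *
      ∑ m ∈ range Ny,
        exp (I * ↑(π * (Real.sin φ₁ * Real.cos θ₁ - Real.sin φ₂ * Real.cos θ₂))) ^ m := by
  rw [sum_range, sum_range]
  simp only [star_upaSteering_mul_upaSteering, Fintype.sum_prod_type, ← mul_sum, ← sum_mul]

theorem upaCrosstalk_nonneg (Nx Ny : ℕ) (φ₁ θ₁ φ₂ θ₂ : ℝ) : 0 ≤ upaCrosstalk Nx Ny φ₁ θ₁ φ₂ θ₂ := by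
  unfold upaCrosstalk
  positivity

section

variable {φ₁ θ₁ φ₂ θ₂ δx δy : ℝ}

theorem upaCrosstalk_le (Nx Ny : ℕ)
    (hδx : δx = Real.cos φ₁ * Real.cos θ₁ - Real.cos φ₂ * Real.cos θ₂)
    (hδy : δy = Real.sin φ₁ * Real.cos θ₁ - Real.sin φ₂ * Real.cos θ₂)
    (hx : Real.sin (π * δx / 2) ≠ 0) (hy : Real.sin (π * δy / 2) ≠ 0) :
    upaCrosstalk Nx Ny φ₁ θ₁ φ₂ θ₂ ≤
      1 / ((Nx : ℝ) * Ny * Real.sin (π * δx / 2) ^ 2 * Real.sin (π * δy / 2) ^ 2) := by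
  subst hδx hδy
  rw [upaCrosstalk, sum_star_upaSteering_mul_upaSteering, norm_mul]
  calc _ ≤ (1 / |Real.sin (π * (Real.cos φ₁ * Real.cos θ₁ - Real.cos φ₂ * Real.cos θ₂) / 2)| *
          (1 / |Real.sin (π * (Real.sin φ₁ * Real.cos θ₁ - Real.sin φ₂ * Real.cos θ₂) / 2)|)) ^ 2
          / (Nx * Ny) := by
        gcongr
        exacts [norm_geom_sum_exp_I_mul_le hx Nx, norm_geom_sum_exp_I_mul_le hy Ny]
    _ = _ := by
      simp only [mul_pow, div_pow, sq_abs]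
      ring

theorem tendsto_upaCrosstalk_nhds_zero {ι : Type*} {l : Filter ι} {Nx Ny : ι → ℕ}
    (hδx : δx = Real.cos φ₁ * Real.cos θ₁ - Real.cos φ₂ * Real.cos θ₂)
    (hδy : δy = Real.sin φ₁ * Real.cos θ₁ - Real.sin φ₂ * Real.cos θ₂)
    (hx : Real.sin (π * δx / 2) ≠ 0) (hy : Real.sin (π * δy / 2) ≠ 0)
    (hN : Tendsto (fun k => Nx k * Ny k) l atTop) :
    Tendsto (fun k => upaCrosstalk (Nx k) (Ny k) φ₁ θ₁ φ₂ θ₂) l (𝓝 0) := by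
  have hc : 0 < Real.sin (π * δx / 2) ^ 2 * Real.sin (π * δy / 2) ^ 2 := by positivity
  have hbound : Tendsto (fun k => 1 / (((Nx k * Ny k : ℕ) : ℝ) *
      (Real.sin (π * δx / 2) ^ 2 * Real.sin (π * δy / 2) ^ 2))) l (𝓝 0) := by
    simp only [one_div]
    exact ((tendsto_natCast_atTop_atTop.comp hN).atTop_mul_const hc).inv_tendsto_atTop
  refine squeeze_zero (fun k => upaCrosstalk_nonneg _ _ _ _ _ _)
    (fun k => (upaCrosstalk_le _ _ hδx hδy hx hy).trans_eq ?_) hbound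
  push_cast
  ring

end

/-- Lemma 1 (asymptotic orthogonality): the crosstalk coefficient is bounded by
`1 / (N sin²(πδx/2) sin²(πδy/2))` with `N = Nx·Ny`; in particular, it tends to
`0` as `N = Nx·Ny → ∞`, so distinct steering vectors become asymptotically
orthogonal. -/
theorem upa_crosstalk_le_and_tendsto_zero (φ₁ θ₁ φ₂ θ₂ δx δy : ℝ)
    (hδx : δx = Real.cos φ₁ * Real.cos θ₁ - Real.cos φ₂ * Real.cos θ₂)
    (hδy : δy = Real.sin φ₁ * Real.cos θ₁ - Real.sin φ₂ * Real.cos θ₂)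
    (hx : Real.sin (Real.pi * δx / 2) ≠ 0) (hy : Real.sin (Real.pi * δy / 2) ≠ 0) :
    (∀ Nx Ny : ℕ, 0 < Nx → 0 < Ny →
      upaCrosstalk Nx Ny φ₁ θ₁ φ₂ θ₂ ≤
        1 / (((Nx : ℝ) * (Ny : ℝ)) *
          Real.sin (Real.pi * δx / 2)^2 * Real.sin (Real.pi * δy / 2)^2)) ∧
    (∀ Nxf Nyf : ℕ → ℕ, (∀ k, 0 < Nxf k) → (∀ k, 0 < Nyf k) →
      Filter.Tendsto (fun k => Nxf k * Nyf k) Filter.atTop Filter.atTop →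
      Filter.Tendsto (fun k => upaCrosstalk (Nxf k) (Nyf k) φ₁ θ₁ φ₂ θ₂)
        Filter.atTop (nhds 0)) :=
  ⟨fun Nx Ny _ _ => upaCrosstalk_le Nx Ny hδx hδy hx hy,
    fun _ _ _ _ hN => tendsto_upaCrosstalk_nhds_zero hδx hδy hx hy hN⟩
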